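/- Let h ∈ R be a nonzero squarefree homogeneous polynomial of degree k with 1 ≤ k ≤ n − 2 such that d(h) = 0, and suppose there exists a Z/2-subspace W of V of dimension n − k such that for every monomial X_{v_1}⋯X_{v_k} in the support of h, the images of v_1, …, v_k in the quotient space V/W are linearly independent. Then h is G-colorable. -/
import Mathlib


open MvPolynomial

/-- The differential operator `d = Σ_{v∈V} ∂/∂X_v` on
`MvPolynomial ((Z/2)^n) (ZMod 2)`. -/
noncomputable def dOp (n : ℕ) :
    MvPolynomial (Fin n → ZMod 2) (ZMod 2) →ₗ[ZMod 2]
      MvPolynomial (Fin n → ZMod 2) (ZMod 2) :=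
  ∑ v : Fin n → ZMod 2, (pderiv v).toLinearMap

/-- A polynomial is squarefree if every monomial in its support has all exponents `≤ 1`
and does not involve the variable indexed by the zero vector. -/
def IsSqFree (n : ℕ) (p : MvPolynomial (Fin n → ZMod 2) (ZMod 2)) : Prop :=
  ∀ m ∈ p.support, (∀ v : Fin n → ZMod 2, m v ≤ 1) ∧ m 0 = 0

/-- `p` is the coloring polynomial of a `(Z/2)^n`-colored product of simplices
`Δ^{k_1} × ⋯ × Δ^{k_ℓ}` of total dimension `k`:
`p = Π_{m=1}^{ℓ} d(X_{s_{m,0}} X_{s_{m,1}} ⋯ X_{s_{m,k_m}})` where for every choice of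
omitted indices, the remaining `k` color vectors are linearly independent. -/
noncomputable def IsColoringPoly (n k : ℕ)
    (p : MvPolynomial (Fin n → ZMod 2) (ZMod 2)) : Prop :=
  ∃ ℓ : ℕ, 0 < ℓ ∧ ∃ km : Fin ℓ → ℕ, (∀ m, 0 < km m) ∧ (∑ m, km m) = k ∧
    ∃ s : (m : Fin ℓ) → Fin (km m + 1) → (Fin n → ZMod 2),
      (∀ J : (m : Fin ℓ) → Fin (km m + 1),
        LinearIndependent (ZMod 2)
          (fun x : {x : Σ m : Fin ℓ, Fin (km m + 1) // x.2 ≠ J x.1} =>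
            s x.1.1 x.1.2)) ∧
      p = ∏ m : Fin ℓ, dOp n (∏ j : Fin (km m + 1), X (s m j))

/-- `f` is `G`-colorable: a finite sum of coloring polynomials of `(Z/2)^n`-colored
products of simplices of total dimension `k`. -/
noncomputable def GColorable (n k : ℕ)
    (f : MvPolynomial (Fin n → ZMod 2) (ZMod 2)) : Prop :=
  ∃ (N : ℕ) (F : Fin N → MvPolynomial (Fin n → ZMod 2) (ZMod 2)),
    (∀ a, IsColoringPoly n k (F a)) ∧ f = ∑ a, F a

/-- `dOp` applied to a polynomial is the sum of all partial derivatives. -/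
lemma dOp_apply (n : ℕ) (q : MvPolynomial (Fin n → ZMod 2) (ZMod 2)) :
    dOp n q = ∑ v : Fin n → ZMod 2, pderiv v q := by
  simp [dOp, LinearMap.sum_apply]

/-- Leibniz rule for `dOp` against a single variable. -/
lemma dOp_X_mul (n : ℕ) (z : Fin n → ZMod 2)
    (p : MvPolynomial (Fin n → ZMod 2) (ZMod 2)) :
    dOp n (X z * p) = p + X z * dOp n p := by
  classical
  rw [dOp_apply, dOp_apply]
  rw [Finset.sum_congr rfl (fun v _ => (pderiv_mul (i := v) (f := X z) (g := p)))]
  rw [Finset.sum_add_distrib, ← Finset.sum_mul, ← Finset.mul_sum]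
  have hz : (∑ v : Fin n → ZMod 2,
      pderiv v (X z : MvPolynomial (Fin n → ZMod 2) (ZMod 2))) = 1 := by
    rw [Finset.sum_eq_single z]
    · simp
    · intro v _ hv; exact pderiv_X_of_ne (Ne.symm hv)
    · simp
  rw [hz, one_mul]

/-- `d(X_z X_{v_1} ⋯ X_{v_k})` is a coloring polynomial (with `ℓ = 1`), where
`z ∈ W ∖ {0}` and the `v_i` are linearly independent modulo `W`. -/
lemma isColoringPoly_cone (n k : ℕ) (hk1 : 1 ≤ k)
    (W : Submodule (ZMod 2) (Fin n → ZMod 2))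
    (z : Fin n → ZMod 2) (hzW : z ∈ W) (hz0 : z ≠ 0)
    (m : (Fin n → ZMod 2) →₀ ℕ)
    (hm1 : ∀ v ∈ m.support, m v = 1)
    (hcard : m.support.card = k)
    (hind : LinearIndependent (ZMod 2)
        (fun v : {x // x ∈ m.support} => W.mkQ (v : Fin n → ZMod 2))) :
    IsColoringPoly n k (dOp n (X z * monomial m 1)) := by
  classical
  set ε : Fin k ≃ {x // x ∈ m.support} :=
    (finCongr hcard.symm).trans m.support.equivFin.symm with hε
  set f : Fin (k+1) → (Fin n → ZMod 2) :=
    Fin.cons z (fun i => (ε i : Fin n → ZMod 2)) with hfdef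
  have hvind : LinearIndependent (ZMod 2)
      (fun i : Fin k => W.mkQ ((ε i : Fin n → ZMod 2))) :=
    hind.comp ε ε.injective
  have hf : LinearIndependent (ZMod 2) f := by
    rw [Fintype.linearIndependent_iff]
    intro g hg
    have hg' : g 0 • z + ∑ i : Fin k, g i.succ • (ε i : Fin n → ZMod 2) = 0 := by
      rw [← hg, Fin.sum_univ_succ]
      simp [hfdef]
    have hzq : W.mkQ z = 0 := (Submodule.Quotient.mk_eq_zero W).2 hzW
    have hq : ∑ i : Fin k, g i.succ • W.mkQ ((ε i : Fin n → ZMod 2)) = 0 := by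
      have h2 := congrArg W.mkQ hg'
      simp only [map_add, map_sum, map_smul, map_zero, hzq, smul_zero, zero_add] at h2
      exact h2
    have hsucc : ∀ i : Fin k, g i.succ = 0 :=
      Fintype.linearIndependent_iff.mp hvind _ hq
    have h0 : g 0 = 0 := by
      have hz' : g 0 • z = 0 := by
        have h3 := hg'
        simp only [hsucc, zero_smul, Finset.sum_const_zero, add_zero] at h3
        exact h3
      rcases smul_eq_zero.mp hz' with h | h
      · exact h
      · exact absurd h hz0
    intro i
    refine Fin.cases h0 hsucc i
  refine ⟨1, one_pos, fun _ => k, fun _ => hk1, by simp, fun _ => f, ?_, ?_⟩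
  · intro J
    have hinj : Function.Injective
        (fun x : {x : Σ _ : Fin 1, Fin (k+1) // x.2 ≠ J x.1} => x.1.2) := by
      rintro ⟨⟨a, b⟩, hx⟩ ⟨⟨c, d⟩, hy⟩ hxy
      simp only at hxy
      apply Subtype.ext
      obtain rfl : a = c := Subsingleton.elim a c
      simpa using hxy
    exact hf.comp _ hinj
  · rw [Fin.prod_univ_one]
    congr 1
    rw [Fin.prod_univ_succ]
    simp only [hfdef, Fin.cons_zero, Fin.cons_succ]
    congr 1
    rw [ε.prod_comp (fun x : {x // x ∈ m.support} => X (x : Fin n → ZMod 2))]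
    rw [Finset.prod_coe_sort m.support
      (fun v => (X v : MvPolynomial (Fin n → ZMod 2) (ZMod 2)))]
    rw [monomial_eq, Finsupp.prod, map_one, one_mul]
    exact Finset.prod_congr rfl (fun v hv => by rw [hm1 v hv, pow_one])

/-- Key lemma: a nonzero squarefree homogeneous degree-`k` polynomial (`1 ≤ k ≤ n-2`)
with `d h = 0` whose monomials stay linearly independent modulo some
`(n-k)`-dimensional subspace `W` is `G`-colorable. -/
theorem gColorable_of_indep_mod_subspace (n k : ℕ) (hn : 1 ≤ n)
    (hk1 : 1 ≤ k) (hk2 : k ≤ n - 2)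
    (h : MvPolynomial (Fin n → ZMod 2) (ZMod 2)) (h0 : h ≠ 0)
    (hsf : IsSqFree n h) (hhom : h.IsHomogeneous k) (hd : dOp n h = 0)
    (W : Submodule (ZMod 2) (Fin n → ZMod 2))
    (hW : Module.finrank (ZMod 2) W = n - k)
    (hquot : ∀ m ∈ h.support,
      LinearIndependent (ZMod 2)
        (fun v : {x // x ∈ m.support} => W.mkQ (v : Fin n → ZMod 2))) :
    GColorable n k h := by
  classical
  -- W contains a nonzero vector
  obtain ⟨z, hzW, hz0⟩ : ∃ z ∈ W, z ≠ (0 : Fin n → ZMod 2) := by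
    by_contra hcon
    push_neg at hcon
    have hbot : W = ⊥ := by
      rw [Submodule.eq_bot_iff]
      exact hcon
    rw [hbot, finrank_bot] at hW
    have hnk : 2 ≤ n - k := by omega
    omega
  -- facts about monomials in the support
  have hm1 : ∀ m ∈ h.support, ∀ v ∈ m.support, m v = 1 := by
    intro m hm v hv
    have hle := (hsf m hm).1 v
    have hne : m v ≠ 0 := Finsupp.mem_support_iff.mp hv
    omega
  have hcard : ∀ m ∈ h.support, m.support.card = k := by
    intro m hm
    have hw := hhom (MvPolynomial.mem_support_iff.mp hm)
    rw [Finsupp.weight_apply, Finsupp.sum] at hw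
    simp only [Pi.one_apply, smul_eq_mul, mul_one] at hw
    rw [← hw, Finset.card_eq_sum_ones]
    exact Finset.sum_congr rfl (fun v hv => (hm1 m hm v hv).symm)
  -- assemble
  set N := h.support.card with hN
  set σe : Fin N ≃ {x // x ∈ h.support} := h.support.equivFin.symm with hσ
  refine ⟨N, fun a => dOp n (X z * monomial ((σe a : {x // x ∈ h.support}) :
      (Fin n → ZMod 2) →₀ ℕ) 1), ?_, ?_⟩
  · intro a
    exact isColoringPoly_cone n k hk1 W z hzW hz0 _ (hm1 _ (σe a).2)
      (hcard _ (σe a).2) (hquot _ (σe a).2)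
  · have hsum1 : (∑ a : Fin N, dOp n (X z * monomial ((σe a : {x // x ∈ h.support}) :
        (Fin n → ZMod 2) →₀ ℕ) 1))
        = ∑ x : {x // x ∈ h.support}, dOp n (X z * monomial (x : (Fin n → ZMod 2) →₀ ℕ) 1) :=
      Equiv.sum_comp σe (fun x : {x // x ∈ h.support} =>
        dOp n (X z * monomial (x : (Fin n → ZMod 2) →₀ ℕ) 1))
    rw [hsum1, Finset.sum_coe_sort h.support
      (fun m => dOp n (X z * monomial m 1)), ← map_sum, ← Finset.mul_sum]
    have hh : (∑ m ∈ h.support, (monomial m 1 :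
        MvPolynomial (Fin n → ZMod 2) (ZMod 2))) = h := by
      have hone : ∀ x : ZMod 2, x ≠ 0 → x = 1 := by decide
      conv_rhs => rw [h.as_sum]
      exact Finset.sum_congr rfl (fun m hm => by
        rw [hone _ (MvPolynomial.mem_support_iff.mp hm)])
    rw [hh, dOp_X_mul, hd, mul_zero, add_zero]
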